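/- arXiv:2010.03353 — 2 statements merged into one kernel-verified Lean document; each statement's English description precedes it below -/
import Mathlib

section
/- There exists a linear extension operator E mapping vector fields Φ ∈ C(closure of (0,1)ⁿ; ℝⁿ) ∩ C¹((0,1)ⁿ; ℝⁿ) to L¹((-1,2)ⁿ; ℝⁿ) such that: (i) EΦ restricted to (0,1)ⁿ equals Φ; (ii) if div(Φ) = 0 in (0,1)ⁿ then div(EΦ) = 0 in the sense of distributions on (-1,2)ⁿ; and (iii) ‖EΦ‖_{L¹((-1,2)ⁿ)} ≤ 3ⁿ ‖Φ‖_{L¹((0,1)ⁿ)}. -/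
open MeasureTheory
open scoped ENNReal

noncomputable def pdn {n : ℕ} (j : Fin n) (f : (Fin n → ℝ) → ℝ) (x : Fin n → ℝ) : ℝ :=
  fderiv ℝ f x (Pi.single j 1)

/-- The open unit cube `(0,1)ⁿ`. -/
def unitCube (n : ℕ) : Set (Fin n → ℝ) := {x | ∀ j, x j ∈ Set.Ioo (0 : ℝ) 1}

/-- The enlarged cube `(-1,2)ⁿ`. -/
def bigCube (n : ℕ) : Set (Fin n → ℝ) := {x | ∀ j, x j ∈ Set.Ioo (-1 : ℝ) 2}

namespace SolExt

noncomputable section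

def ee : Fin 3 → ℝ := ![-1, 1, -1]
def dd : Fin 3 → ℝ := ![0, 0, 2]
def II : Fin 3 → Set ℝ := ![Set.Ioo (-1) 0, Set.Ioo 0 1, Set.Ioo 1 2]

def rho (t : ℝ) : ℝ := if t < 0 then -t else if t ≤ 1 then t else 2 - t
def sg (t : ℝ) : ℝ := if t < 0 then -1 else if t ≤ 1 then 1 else -1

variable {n : ℕ}

def Tm (σ : Fin n → Fin 3) (x : Fin n → ℝ) : Fin n → ℝ := fun j => ee (σ j) * x j + dd (σ j)

def cell (σ : Fin n → Fin 3) : Set (Fin n → ℝ) := Tm σ ⁻¹' unitCube n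

def Ext (n : ℕ) (Φ : (Fin n → ℝ) → (Fin n → ℝ)) : (Fin n → ℝ) → Fin n → ℝ :=
  fun x i => (sg (x i) * ∏ j, sg (x j)) * Φ (fun j => rho (x j)) i

lemma sg_mul_self (t : ℝ) : sg t * sg t = 1 := by unfold sg; split_ifs <;> norm_num

lemma abs_sg (t : ℝ) : |sg t| = 1 := by unfold sg; split_ifs <;> norm_num

lemma sg_eq {k : Fin 3} {t : ℝ} (h : t ∈ II k) : sg t = ee k := by
  fin_cases k <;> simp [II] at h <;> unfold sg ee <;> split_ifs with h1 h2 <;>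
    simp_all <;> linarith [h.1, h.2]

lemma rho_eq {k : Fin 3} {t : ℝ} (h : t ∈ II k) : rho t = ee k * t + dd k := by
  fin_cases k <;> simp [II] at h <;> unfold rho ee dd <;> split_ifs with h1 h2 <;>
    simp_all <;> linarith [h.1, h.2]

lemma sg_one {t : ℝ} (h : t ∈ Set.Ioo (0:ℝ) 1) : sg t = 1 := by
  unfold sg; split_ifs with h1 h2 <;> first | rfl | (exfalso; obtain ⟨a, b⟩ := h; linarith)

lemma rho_id {t : ℝ} (h : t ∈ Set.Ioo (0:ℝ) 1) : rho t = t := by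
  unfold rho; split_ifs with h1 h2 <;> first | rfl | (exfalso; obtain ⟨a, b⟩ := h; linarith)

lemma rho_mem {t : ℝ} (h : t ∈ Set.Ioo (-1:ℝ) 2) : rho t ∈ Set.Icc (0:ℝ) 1 := by
  obtain ⟨a, b⟩ := h; unfold rho; split_ifs with h1 h2 <;> constructor <;> linarith

lemma rho_cont : Continuous rho := by
  have h1 : Continuous fun t : ℝ => if t ≤ 1 then t else 2 - t :=
    Continuous.if_le continuous_id (continuous_const.sub continuous_id) continuous_id
      continuous_const (by intro a ha; subst ha; norm_num)
  have h2 : Continuous fun t : ℝ => if t ≤ 0 then -t else if t ≤ 1 then t else 2 - t :=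
    Continuous.if_le continuous_neg h1 continuous_id continuous_const
      (by intro a ha; subst ha; norm_num)
  convert h2 using 1
  funext t; unfold rho
  rcases lt_trichotomy t 0 with h | h | h
  · rw [if_pos h, if_pos h.le]
  · subst h; norm_num
  · rw [if_neg (not_lt.2 h.le), if_neg (not_le.2 h)]

lemma sg_meas : Measurable sg := by
  unfold sg
  exact Measurable.ite measurableSet_Iio measurable_const
    (Measurable.ite measurableSet_Iic measurable_const measurable_const)

lemma mem_II_iff (k : Fin 3) (t : ℝ) : ee k * t + dd k ∈ Set.Ioo (0:ℝ) 1 ↔ t ∈ II k := by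
  fin_cases k <;> simp [II, ee, dd] <;> constructor <;> intro h <;>
    first | (constructor <;> linarith [h.1, h.2]) | (constructor <;> linarith [h.1, h.2])

lemma invol1 (k : Fin 3) (t : ℝ) : ee k * (ee k * t + dd k) + dd k = t := by
  fin_cases k <;> simp [ee, dd] <;> ring

lemma Tm_invol (σ : Fin n → Fin 3) (x : Fin n → ℝ) : Tm σ (Tm σ x) = x := by
  funext j; exact invol1 (σ j) (x j)

lemma Tm_continuous (σ : Fin n → Fin 3) : Continuous (Tm σ) := by
  exact continuous_pi fun j => (continuous_const.mul (continuous_apply j)).add continuous_const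

lemma cell_eq_pi (σ : Fin n → Fin 3) :
    cell σ = Set.pi Set.univ (fun j => II (σ j)) := by
  ext x
  simp only [cell, Set.mem_preimage, unitCube, Set.mem_setOf_eq, Set.mem_pi, Set.mem_univ,
    true_imp_iff, Tm]
  exact forall_congr' fun j => mem_II_iff (σ j) (x j)

lemma isOpen_unitCube : IsOpen (unitCube n) := by
  have : unitCube n = Set.pi Set.univ (fun _ : Fin n => Set.Ioo (0:ℝ) 1) := by
    ext x; simp [unitCube, Set.mem_pi]
  rw [this]
  exact isOpen_set_pi Set.finite_univ fun i _ => isOpen_Ioo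

lemma isOpen_bigCube : IsOpen (bigCube n) := by
  have : bigCube n = Set.pi Set.univ (fun _ : Fin n => Set.Ioo (-1:ℝ) 2) := by
    ext x; simp [bigCube, Set.mem_pi]
  rw [this]
  exact isOpen_set_pi Set.finite_univ fun i _ => isOpen_Ioo

lemma isOpen_cell (σ : Fin n → Fin 3) : IsOpen (cell σ) :=
  isOpen_unitCube.preimage (Tm_continuous σ)

lemma closure_unitCube : closure (unitCube n) = Set.Icc 0 1 := by
  have h : unitCube n = Set.pi Set.univ (fun _ : Fin n => Set.Ioo (0:ℝ) 1) := by
    ext x; simp [unitCube, Set.mem_pi]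
  rw [h, closure_pi_set]
  have : (fun _ : Fin n => closure (Set.Ioo (0:ℝ) 1)) = fun _ => Set.Icc (0:ℝ) 1 := by
    funext _; exact closure_Ioo one_ne_zero.symm
  simp only [this]
  exact Set.pi_univ_Icc (fun _ => (0:ℝ)) (fun _ => 1)

lemma unitCube_subset_Icc : unitCube n ⊆ Set.Icc 0 1 := by
  rw [← closure_unitCube]; exact subset_closure

lemma volume_II (k : Fin 3) : volume (II k) = 1 := by
  fin_cases k <;> simp [II, Real.volume_Ioo] <;> norm_num

lemma volume_cell (σ : Fin n → Fin 3) : volume (cell σ) = 1 := by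
  rw [cell_eq_pi, volume_pi_pi]
  simp [volume_II]

lemma volume_unitCube : volume (unitCube n) = 1 := by
  have h : unitCube n = Set.pi Set.univ (fun _ : Fin n => Set.Ioo (0:ℝ) 1) := by
    ext x; simp [unitCube, Set.mem_pi]
  rw [h, volume_pi_pi]
  simp [Real.volume_Ioo]

lemma volume_bigCube : volume (bigCube n) = 3 ^ n := by
  have h : bigCube n = Set.pi Set.univ (fun _ : Fin n => Set.Ioo (-1:ℝ) 2) := by
    ext x; simp [bigCube, Set.mem_pi]
  rw [h, volume_pi_pi]
  have h3 : volume (Set.Ioo (-1:ℝ) 2) = 3 := by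
    rw [Real.volume_Ioo]
    norm_num
  simp [h3]

lemma II_subset (k : Fin 3) : II k ⊆ Set.Ioo (-1:ℝ) 2 := by
  fin_cases k <;> intro t ht <;> simp [II] at ht <;>
    exact Set.mem_Ioo.mpr ⟨by linarith [ht.1, ht.2], by linarith [ht.1, ht.2]⟩

lemma cell_subset_bigCube (σ : Fin n → Fin 3) : cell σ ⊆ bigCube n := by
  rw [cell_eq_pi]
  intro x hx j
  exact II_subset (σ j) (hx j (Set.mem_univ j))

lemma II_disjoint {k k' : Fin 3} (h : k ≠ k') : Disjoint (II k) (II k') := by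
  rw [Set.disjoint_iff_inter_eq_empty]
  ext t
  simp only [Set.mem_inter_iff, Set.mem_empty_iff_false, iff_false, not_and]
  fin_cases k <;> fin_cases k' <;> simp_all [II] <;>
    intro h1 h2 h3 <;> linarith

lemma cell_disjoint : Pairwise (Function.onFun Disjoint (cell (n := n))) := by
  intro σ σ' hss
  obtain ⟨j, hj⟩ := Function.ne_iff.1 hss
  rw [Function.onFun, Set.disjoint_left]
  intro x hx hx'
  rw [cell_eq_pi] at hx hx'
  exact Set.disjoint_left.1 (II_disjoint hj) (hx j (Set.mem_univ j)) (hx' j (Set.mem_univ j))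

lemma volume_iUnion_cell : volume (⋃ σ : Fin n → Fin 3, cell σ) = 3 ^ n := by
  rw [measure_iUnion cell_disjoint fun σ => (isOpen_cell σ).measurableSet]
  simp only [volume_cell, tsum_fintype, Finset.sum_const, Finset.card_univ, smul_eq_mul, mul_one]
  rw [Fintype.card_fun]
  simp

lemma bigCube_ae_eq_iUnion :
    bigCube n =ᵐ[volume] ⋃ σ : Fin n → Fin 3, cell σ := by
  have hsub : (⋃ σ : Fin n → Fin 3, cell σ) ⊆ bigCube n :=
    Set.iUnion_subset fun σ => cell_subset_bigCube σ
  rw [Filter.eventuallyEq_set]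
  have h1 : volume (bigCube n \ ⋃ σ : Fin n → Fin 3, cell σ) = 0 := by
    rw [measure_diff hsub
      (MeasurableSet.iUnion fun σ => (isOpen_cell σ).measurableSet).nullMeasurableSet
      (by rw [volume_iUnion_cell]; exact ENNReal.pow_ne_top (by norm_num)),
      volume_bigCube, volume_iUnion_cell, tsub_self]
  have h2 : volume ((⋃ σ : Fin n → Fin 3, cell σ) \ bigCube n) = 0 := by
    rw [Set.diff_eq_empty.2 hsub]; simp
  have := MeasureTheory.measure_union_null h1 h2
  filter_upwards [MeasureTheory.measure_eq_zero_iff_ae_notMem.1 this] with x hx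
  constructor
  · intro h; by_contra h2'
    exact hx (Or.inl ⟨h, h2'⟩)
  · intro h; by_contra h2'
    exact hx (Or.inr ⟨h, h2'⟩)

lemma mp_neg_add (b : ℝ) : MeasurePreserving (fun t : ℝ => -t + b) volume volume := by
  have h1 : MeasurePreserving (fun t : ℝ => t + b) volume volume :=
    measurePreserving_add_right volume b
  exact h1.comp (Measure.measurePreserving_neg volume)

lemma ee_cases (k : Fin 3) : (ee k = 1 ∧ dd k = 0) ∨ ee k = -1 := by
  fin_cases k <;> simp [ee, dd]

lemma measurePreserving_affine (k : Fin 3) :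
    MeasurePreserving (fun t : ℝ => ee k * t + dd k) volume volume := by
  rcases ee_cases k with ⟨h1, h2⟩ | h
  · simp only [h1, h2, one_mul, add_zero]
    exact MeasurePreserving.id volume
  · have he : (fun t : ℝ => ee k * t + dd k) = fun t : ℝ => -t + dd k := by
      funext t; rw [h]; ring
    rw [he]
    exact mp_neg_add (dd k)

lemma measurePreserving_Tm (σ : Fin n → Fin 3) :
    MeasurePreserving (Tm σ) volume volume :=
  volume_preserving_pi fun j => measurePreserving_affine (σ j)

def TmHomeo (σ : Fin n → Fin 3) : Homeomorph (Fin n → ℝ) (Fin n → ℝ) where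
  toFun := Tm σ
  invFun := Tm σ
  left_inv := Tm_invol σ
  right_inv := Tm_invol σ
  continuous_toFun := Tm_continuous σ
  continuous_invFun := Tm_continuous σ

lemma measurableEmbedding_Tm (σ : Fin n → Fin 3) : MeasurableEmbedding (Tm σ) :=
  (TmHomeo σ).measurableEmbedding

def Lm (σ : Fin n → Fin 3) : (Fin n → ℝ) →L[ℝ] (Fin n → ℝ) :=
  ContinuousLinearMap.pi fun j => ee (σ j) • ContinuousLinearMap.proj j

lemma Lm_apply (σ : Fin n → Fin 3) (v : Fin n → ℝ) (j : Fin n) :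
    Lm σ v j = ee (σ j) * v j := rfl

lemma Tm_eq (σ : Fin n → Fin 3) : Tm σ = fun x => Lm σ x + fun j => dd (σ j) := by
  funext x j; rfl

lemma hasFDerivAt_Tm (σ : Fin n → Fin 3) (x : Fin n → ℝ) :
    HasFDerivAt (Tm σ) (Lm σ : (Fin n → ℝ) →L[ℝ] (Fin n → ℝ)) x := by
  rw [Tm_eq]
  exact (Lm σ).hasFDerivAt.add_const _

lemma contDiff_Tm (σ : Fin n → Fin 3) : ContDiff ℝ (⊤ : ℕ∞) (Tm σ) := by
  rw [Tm_eq]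
  exact (Lm σ).contDiff.add contDiff_const

lemma Lm_single (σ : Fin n → Fin 3) (i : Fin n) :
    Lm σ (Pi.single i 1) = ee (σ i) • (Pi.single i 1 : Fin n → ℝ) := by
  funext j
  rw [Lm_apply]
  rcases eq_or_ne j i with rfl | hji
  · simp
  · simp [Pi.single_eq_of_ne hji]

lemma pdn_comp (φ : (Fin n → ℝ) → ℝ) (hφ : Differentiable ℝ φ) (σ : Fin n → Fin 3)
    (i : Fin n) (y : Fin n → ℝ) :
    pdn i (fun z => φ (Tm σ z)) y = ee (σ i) * pdn i φ (Tm σ y) := by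
  have h1 : fderiv ℝ (fun z => φ (Tm σ z)) y = (fderiv ℝ φ (Tm σ y)).comp (Lm σ) := by
    have h2 := fderiv_comp (𝕜 := ℝ) y (hφ (Tm σ y)) (hasFDerivAt_Tm σ y).differentiableAt
    rw [(hasFDerivAt_Tm σ y).fderiv] at h2
    exact h2
  unfold pdn
  rw [h1]
  rw [ContinuousLinearMap.comp_apply, Lm_single, ContinuousLinearMap.map_smul, smul_eq_mul]

lemma cont_pdn {φ : (Fin n → ℝ) → ℝ} (hφ : ContDiff ℝ (⊤ : ℕ∞) φ) (i : Fin n) :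
    Continuous (pdn i φ) := by
  have h := hφ.continuous_fderiv (by simp)
  exact (ContinuousLinearMap.apply ℝ ℝ (Pi.single i 1)).continuous.comp h

def Psi (n : ℕ) (φ : (Fin n → ℝ) → ℝ) : (Fin n → ℝ) → ℝ :=
  fun y => ∑ σ : Fin n → Fin 3, (∏ j, ee (σ j)) * φ (Tm σ y)

lemma contDiff_Psi (φ : (Fin n → ℝ) → ℝ) (hφ : ContDiff ℝ (⊤ : ℕ∞) φ) :
    ContDiff ℝ (⊤ : ℕ∞) (Psi n φ) := by
  apply ContDiff.sum
  intro σ _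
  exact contDiff_const.mul (hφ.comp (contDiff_Tm σ))

lemma pdn_Psi (φ : (Fin n → ℝ) → ℝ) (hφ : ContDiff ℝ (⊤ : ℕ∞) φ) (i : Fin n) (y : Fin n → ℝ) :
    pdn i (Psi n φ) y = ∑ σ : Fin n → Fin 3, (∏ j, ee (σ j)) * pdn i (fun z => φ (Tm σ z)) y := by
  have hdiff : ∀ σ : Fin n → Fin 3, Differentiable ℝ (fun z : Fin n → ℝ => φ (Tm σ z)) :=
    fun σ => (hφ.comp (contDiff_Tm σ)).differentiable (by simp)
  unfold pdn Psi
  rw [fderiv_fun_sum (u := Finset.univ)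
    (A := fun (σ : Fin n → Fin 3) (y : Fin n → ℝ) => (∏ j, ee (σ j)) * φ (Tm σ y))
    (fun σ _ => ((hdiff σ) y).const_mul _)]
  rw [ContinuousLinearMap.sum_apply]
  refine Finset.sum_congr rfl fun σ _ => ?_
  rw [fderiv_const_mul ((hdiff σ) y)]
  simp

def flip0 : Fin 3 → Fin 3 := ![1, 0, 2]
def flip1 : Fin 3 → Fin 3 := ![0, 2, 1]

lemma fin3_cases (v : Fin 3) : v = 0 ∨ v = 1 ∨ v = 2 := by
  fin_cases v <;> simp

lemma prod_ee_update (σ : Fin n → Fin 3) (k : Fin n) (v : Fin 3) :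
    ∏ j, ee (Function.update σ k v j) = ee v * ∏ j ∈ Finset.univ.erase k, ee (σ j) := by
  rw [show (∏ j, ee (Function.update σ k v j))
      = ∏ j, Function.update (fun j => ee (σ j)) k (ee v) j from
    Finset.prod_congr rfl fun j _ => by
      rcases eq_or_ne j k with rfl | hj
      · simp
      · simp [Function.update_of_ne hj]]
  rw [Finset.prod_update_of_mem (Finset.mem_univ k) (fun j => ee (σ j)) (ee v),
    Finset.sdiff_singleton_eq_erase]

lemma Tm_update (σ : Fin n → Fin 3) (k : Fin n) (v : Fin 3) (y : Fin n → ℝ)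
    (h : ee v * y k + dd v = ee (σ k) * y k + dd (σ k)) :
    Tm (Function.update σ k v) y = Tm σ y := by
  funext j
  unfold Tm
  rcases eq_or_ne j k with rfl | hj
  · simpa using h
  · rw [Function.update_of_ne hj]

lemma Tm_notin_bigCube (σ : Fin n → Fin 3) (k : Fin n) (y : Fin n → ℝ)
    (h : ee (σ k) * y k + dd (σ k) ∉ Set.Ioo (-1:ℝ) 2) :
    Tm σ y ∉ bigCube n := by
  intro hb
  exact h (hb k)

lemma flip_vals : flip0 0 = 1 ∧ flip0 1 = 0 ∧ flip0 2 = 2 ∧ flip1 0 = 0 ∧ flip1 1 = 2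
    ∧ flip1 2 = 1 := by
  refine ⟨?_, ?_, ?_, ?_, ?_, ?_⟩ <;> decide

lemma Psi_vanish (φ : (Fin n → ℝ) → ℝ) (hsupp : ∀ z, z ∉ bigCube n → φ z = 0)
    (y : Fin n → ℝ) (k : Fin n) (hy : y k = 0 ∨ y k = 1) : Psi n φ y = 0 := by
  classical
  unfold Psi
  rcases hy with hy | hy
  · apply Finset.sum_ninvolution (g := fun σ => Function.update σ k (flip0 (σ k)))
    · intro σ
      rcases fin3_cases (σ k) with h | h | h
      · have hTm : Tm (Function.update σ k (flip0 (σ k))) y = Tm σ y :=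
          Tm_update _ _ _ _ (by rw [h, hy, flip_vals.1]; norm_num [ee, dd, Matrix.cons_val_two, Matrix.tail_cons, Matrix.head_cons])
        rw [prod_ee_update, hTm,
          ← Finset.mul_prod_erase Finset.univ (fun j => ee (σ j)) (Finset.mem_univ k), h,
          flip_vals.1, show ee 1 = 1 by simp [ee], show ee 0 = -1 by simp [ee]]
        ring
      · have hTm : Tm (Function.update σ k (flip0 (σ k))) y = Tm σ y :=
          Tm_update _ _ _ _ (by rw [h, hy, flip_vals.2.1]; norm_num [ee, dd, Matrix.cons_val_two, Matrix.tail_cons, Matrix.head_cons])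
        rw [prod_ee_update, hTm,
          ← Finset.mul_prod_erase Finset.univ (fun j => ee (σ j)) (Finset.mem_univ k), h,
          flip_vals.2.1, show ee 1 = 1 by simp [ee], show ee 0 = -1 by simp [ee]]
        ring
      · have hz : φ (Tm σ y) = 0 := by
          apply hsupp
          apply Tm_notin_bigCube σ k
          rw [h, hy]
          norm_num [ee, dd, Matrix.cons_val_two, Matrix.tail_cons, Matrix.head_cons]
        have hg : Function.update σ k (flip0 (σ k)) = σ := by
          rw [h, flip_vals.2.2.1, ← h]
          exact Function.update_eq_self k σ
        rw [hg, hz]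
        ring
    · intro σ hσ
      rcases fin3_cases (σ k) with h | h | h
      · intro heq
        have h2 := congrFun heq k
        rw [Function.update_self, h] at h2
        exact absurd h2 (by decide)
      · intro heq
        have h2 := congrFun heq k
        rw [Function.update_self, h] at h2
        exact absurd h2 (by decide)
      · exfalso
        apply hσ
        have hz : φ (Tm σ y) = 0 := by
          apply hsupp
          apply Tm_notin_bigCube σ k
          rw [h, hy]
          norm_num [ee, dd, Matrix.cons_val_two, Matrix.tail_cons, Matrix.head_cons]
        rw [hz, mul_zero]
    · intro σ; exact Finset.mem_univ _
    · intro σ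
      rw [Function.update_idem, Function.update_self]
      have h3 : flip0 (flip0 (σ k)) = σ k := by
        rcases fin3_cases (σ k) with h | h | h <;> rw [h] <;> decide
      rw [h3]
      exact Function.update_eq_self k σ
  · apply Finset.sum_ninvolution (g := fun σ => Function.update σ k (flip1 (σ k)))
    · intro σ
      rcases fin3_cases (σ k) with h | h | h
      · have hz : φ (Tm σ y) = 0 := by
          apply hsupp
          apply Tm_notin_bigCube σ k
          rw [h, hy]
          norm_num [ee, dd, Matrix.cons_val_two, Matrix.tail_cons, Matrix.head_cons]
        have hg : Function.update σ k (flip1 (σ k)) = σ := by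
          rw [h, flip_vals.2.2.2.1, ← h]
          exact Function.update_eq_self k σ
        rw [hg, hz]
        ring
      · have hTm : Tm (Function.update σ k (flip1 (σ k))) y = Tm σ y :=
          Tm_update _ _ _ _ (by rw [h, hy, flip_vals.2.2.2.2.1]; norm_num [ee, dd, Matrix.cons_val_two, Matrix.tail_cons, Matrix.head_cons])
        rw [prod_ee_update, hTm,
          ← Finset.mul_prod_erase Finset.univ (fun j => ee (σ j)) (Finset.mem_univ k), h,
          flip_vals.2.2.2.2.1, show ee 1 = 1 by simp [ee], show ee 2 = -1 by simp [ee]]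
        ring
      · have hTm : Tm (Function.update σ k (flip1 (σ k))) y = Tm σ y :=
          Tm_update _ _ _ _ (by rw [h, hy, flip_vals.2.2.2.2.2]; norm_num [ee, dd, Matrix.cons_val_two, Matrix.tail_cons, Matrix.head_cons])
        rw [prod_ee_update, hTm,
          ← Finset.mul_prod_erase Finset.univ (fun j => ee (σ j)) (Finset.mem_univ k), h,
          flip_vals.2.2.2.2.2, show ee 1 = 1 by simp [ee], show ee 2 = -1 by simp [ee]]
        ring
    · intro σ hσ
      rcases fin3_cases (σ k) with h | h | h
      · exfalso
        apply hσ
        have hz : φ (Tm σ y) = 0 := by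
          apply hsupp
          apply Tm_notin_bigCube σ k
          rw [h, hy]
          norm_num [ee, dd, Matrix.cons_val_two, Matrix.tail_cons, Matrix.head_cons]
        rw [hz, mul_zero]
      · intro heq
        have h2 := congrFun heq k
        rw [Function.update_self, h] at h2
        exact absurd h2 (by decide)
      · intro heq
        have h2 := congrFun heq k
        rw [Function.update_self, h] at h2
        exact absurd h2 (by decide)
    · intro σ; exact Finset.mem_univ _
    · intro σ
      rw [Function.update_idem, Function.update_self]
      have h3 : flip1 (flip1 (σ k)) = σ k := by
        rcases fin3_cases (σ k) with h | h | h <;> rw [h] <;> decide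
      rw [h3]
      exact Function.update_eq_self k σ

lemma Ext_on_unitCube (Φ : (Fin n → ℝ) → (Fin n → ℝ)) {x : Fin n → ℝ}
    (hx : x ∈ unitCube n) : Ext n Φ x = Φ x := by
  funext i
  unfold Ext
  have h1 : ∀ j, sg (x j) = 1 := fun j => sg_one (hx j)
  have h2 : (fun j => rho (x j)) = x := funext fun j => rho_id (hx j)
  rw [h2]
  simp [h1]

lemma Ext_on_cell (Φ : (Fin n → ℝ) → (Fin n → ℝ)) (σ : Fin n → Fin 3) {x : Fin n → ℝ}
    (hx : x ∈ cell σ) (i : Fin n) :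
    Ext n Φ x i = (ee (σ i) * ∏ j, ee (σ j)) * Φ (Tm σ x) i := by
  have hmem : ∀ j, x j ∈ II (σ j) := by
    rw [cell_eq_pi] at hx
    exact fun j => hx j (Set.mem_univ j)
  unfold Ext
  have h2 : (fun j => rho (x j)) = Tm σ x := funext fun j => rho_eq (hmem j)
  have h3 : ∏ j, sg (x j) = ∏ j, ee (σ j) := Finset.prod_congr rfl fun j _ => sg_eq (hmem j)
  rw [h2, sg_eq (hmem i), h3]

lemma norm_Ext (Φ : (Fin n → ℝ) → (Fin n → ℝ)) (x : Fin n → ℝ) :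
    ‖Ext n Φ x‖ = ‖Φ (fun j => rho (x j))‖ := by
  unfold Ext
  rw [Pi.norm_def, Pi.norm_def]
  congr 1
  apply Finset.sup_congr rfl
  intro i _
  have h1 : |sg (x i) * ∏ j, sg (x j)| = 1 := by
    rw [abs_mul, Finset.abs_prod]
    simp [abs_sg]
  have : ‖sg (x i) * ∏ j, sg (x j)‖₊ = 1 := by
    rw [← NNReal.coe_inj]
    rw [coe_nnnorm, Real.norm_eq_abs, h1]
    rfl
  rw [nnnorm_mul, this, one_mul]

lemma ae_eq_of_diff_null {α : Type*} [MeasurableSpace α] {μ : Measure α} {s t : Set α}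
    (hts : t ⊆ s) (h : μ (s \ t) = 0) : s =ᵐ[μ] t := by
  rw [Filter.eventuallyEq_set]
  have h2 : μ (t \ s) = 0 := by rw [Set.diff_eq_empty.2 hts]; simp
  have h3 := MeasureTheory.measure_union_null h h2
  filter_upwards [MeasureTheory.measure_eq_zero_iff_ae_notMem.1 h3] with x hx
  constructor
  · intro hxs; by_contra hxt; exact hx (Or.inl ⟨hxs, hxt⟩)
  · intro hxt; by_contra hxs; exact hx (Or.inr ⟨hxt, hxs⟩)

lemma volume_Icc01 : volume (Set.Icc (0 : Fin n → ℝ) 1) = 1 := by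
  rw [Real.volume_Icc_pi]
  simp

lemma restrict_Icc_eq_restrict_unitCube :
    volume.restrict (Set.Icc (0 : Fin n → ℝ) 1) = volume.restrict (unitCube n) := by
  apply Measure.restrict_congr_set
  apply ae_eq_of_diff_null unitCube_subset_Icc
  rw [measure_diff unitCube_subset_Icc isOpen_unitCube.measurableSet.nullMeasurableSet
    (by rw [volume_unitCube]; exact ENNReal.one_ne_top),
    volume_Icc01, volume_unitCube, tsub_self]

lemma key_div (m : ℕ) (Φ : (Fin (m+1) → ℝ) → (Fin (m+1) → ℝ))
    (hΦc : ContinuousOn Φ (closure (unitCube (m+1))))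
    (hΦd : ContDiffOn ℝ 1 Φ (unitCube (m+1)))
    (hdiv : ∀ x ∈ unitCube (m+1), ∑ j, pdn j (fun y => Φ y j) x = 0)
    (Ψ : (Fin (m+1) → ℝ) → ℝ) (hΨ : ContDiff ℝ (⊤ : ℕ∞) Ψ)
    (hvan : ∀ y : Fin (m+1) → ℝ, ∀ k, (y k = 0 ∨ y k = 1) → Ψ y = 0) :
    ∫ y in unitCube (m+1), ∑ i, Φ y i * pdn i Ψ y = 0 := by
  have hΨd : Differentiable ℝ Ψ := hΨ.differentiable (by simp)
  have hΦx : ∀ x ∈ unitCube (m+1), DifferentiableAt ℝ Φ x := fun x hx =>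
    (hΦd.differentiableOn one_ne_zero x hx).differentiableAt (isOpen_unitCube.mem_nhds hx)
  set f : (Fin (m+1) → ℝ) → (Fin (m+1) → ℝ) := fun x => Ψ x • Φ x with hf
  set f' : (Fin (m+1) → ℝ) → ((Fin (m+1) → ℝ) →L[ℝ] (Fin (m+1) → ℝ)) := fun x =>
    Ψ x • fderiv ℝ Φ x + (fderiv ℝ Ψ x).smulRight (Φ x) with hf'
  have hIccc : closure (unitCube (m+1)) = Set.Icc (0 : Fin (m+1) → ℝ) 1 := closure_unitCube
  have hpi : (Set.pi Set.univ fun i => Set.Ioo ((0 : Fin (m+1) → ℝ) i) ((1 : Fin (m+1) → ℝ) i))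
      = unitCube (m+1) := by
    ext x; simp [unitCube, Set.mem_pi]
  have hle : (0 : Fin (m+1) → ℝ) ≤ 1 := fun i => zero_le_one
  have Hc : ContinuousOn f (Set.Icc (0 : Fin (m+1) → ℝ) 1) := by
    rw [← hIccc]
    exact (hΨ.continuous.continuousOn).smul hΦc
  have Hd : ∀ x ∈ (Set.pi Set.univ fun i =>
      Set.Ioo ((0 : Fin (m+1) → ℝ) i) ((1 : Fin (m+1) → ℝ) i)) \ (∅ : Set (Fin (m+1) → ℝ)),
      HasFDerivAt f (f' x) x := by
    intro x hx
    have hxu : x ∈ unitCube (m+1) := by rw [← hpi]; exact hx.1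
    exact (hΨd x).hasFDerivAt.smul (hΦx x hxu).hasFDerivAt
  have hsplit : ∀ x, ∑ i, f' x (Pi.single i 1) i =
      Ψ x * (∑ i, (fderiv ℝ Φ x (Pi.single i 1)) i) + ∑ i, pdn i Ψ x * Φ x i := by
    intro x
    rw [Finset.mul_sum, ← Finset.sum_add_distrib]
    refine Finset.sum_congr rfl fun i _ => ?_
    simp [hf', pdn, ContinuousLinearMap.smulRight_apply, smul_eq_mul, mul_comm]
  have hcomp : ∀ x ∈ unitCube (m+1), ∀ j : Fin (m+1),
      pdn j (fun y => Φ y j) x = (fderiv ℝ Φ x (Pi.single j 1)) j := by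
    intro x hx j
    have h6 : HasFDerivAt (fun y => Φ y j)
        ((ContinuousLinearMap.proj j : ((Fin (m+1) → ℝ)) →L[ℝ] ℝ).comp (fderiv ℝ Φ x)) x :=
      (ContinuousLinearMap.proj j :
        ((Fin (m+1) → ℝ)) →L[ℝ] ℝ).hasFDerivAt.comp x (hΦx x hx).hasFDerivAt
    unfold pdn
    rw [h6.fderiv]
    rfl
  have hpoint : ∀ x ∈ unitCube (m+1),
      ∑ i, f' x (Pi.single i 1) i = ∑ i, Φ x i * pdn i Ψ x := by
    intro x hx
    rw [hsplit x]
    have h7 : ∑ i, (fderiv ℝ Φ x (Pi.single i 1)) i = 0 := by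
      rw [← hdiv x hx]
      exact Finset.sum_congr rfl fun j _ => (hcomp x hx j).symm
    rw [h7, mul_zero, zero_add]
    exact Finset.sum_congr rfl fun i _ => mul_comm _ _
  have hGc : ContinuousOn (fun x => ∑ i, Φ x i * pdn i Ψ x)
      (Set.Icc (0 : Fin (m+1) → ℝ) 1) := by
    apply continuousOn_finset_sum
    intro i _
    exact (((continuous_apply i).comp_continuousOn (hIccc ▸ hΦc))).mul
      ((cont_pdn hΨ i).continuousOn)
  have hGint : IntegrableOn (fun x => ∑ i, Φ x i * pdn i Ψ x)
      (Set.Icc (0 : Fin (m+1) → ℝ) 1) := hGc.integrableOn_compact isCompact_Icc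
  have haemem : ∀ᵐ x ∂(volume.restrict (Set.Icc (0 : Fin (m+1) → ℝ) 1)),
      x ∈ unitCube (m+1) := by
    rw [restrict_Icc_eq_restrict_unitCube]
    exact ae_restrict_mem isOpen_unitCube.measurableSet
  have haeeq : (fun x => ∑ i, f' x (Pi.single i 1) i)
      =ᵐ[volume.restrict (Set.Icc (0 : Fin (m+1) → ℝ) 1)]
      (fun x => ∑ i, Φ x i * pdn i Ψ x) :=
    haemem.mono fun x hx => hpoint x hx
  have Hi : IntegrableOn (fun x => ∑ i, f' x (Pi.single i 1) i)
      (Set.Icc (0 : Fin (m+1) → ℝ) 1) := hGint.congr haeeq.symm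
  have hdivthm := MeasureTheory.integral_divergence_of_hasFDerivAt_off_countable
    (a := (0 : Fin (m+1) → ℝ)) (b := 1) hle f f' ∅ Set.countable_empty Hc Hd Hi
  have hzero1 : ∀ (i : Fin (m+1)) (x : Fin m → ℝ),
      f (i.insertNth ((1 : Fin (m+1) → ℝ) i) x) i = 0 := by
    intro i x
    have h1 : (Fin.insertNth (α := fun _ => ℝ) i ((1 : Fin (m+1) → ℝ) i) x) i = 1 := by
      simpa using Fin.insertNth_apply_same (α := fun _ => ℝ) i ((1 : Fin (m+1) → ℝ) i) x
    show Ψ _ * Φ _ i = 0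
    rw [hvan _ i (Or.inr h1), zero_mul]
  have hzero0 : ∀ (i : Fin (m+1)) (x : Fin m → ℝ),
      f (i.insertNth ((0 : Fin (m+1) → ℝ) i) x) i = 0 := by
    intro i x
    have h1 : (Fin.insertNth (α := fun _ => ℝ) i ((0 : Fin (m+1) → ℝ) i) x) i = 0 := by
      simpa using Fin.insertNth_apply_same (α := fun _ => ℝ) i ((0 : Fin (m+1) → ℝ) i) x
    show Ψ _ * Φ _ i = 0
    rw [hvan _ i (Or.inl h1), zero_mul]
  have hIcc0 : ∫ x in Set.Icc (0 : Fin (m+1) → ℝ) 1, ∑ i, f' x (Pi.single i 1) i = 0 := by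
    rw [hdivthm]
    apply Finset.sum_eq_zero
    intro i _
    have e1 : (∫ x in Set.Icc ((0 : Fin (m+1) → ℝ) ∘ i.succAbove) ((1 : Fin (m+1) → ℝ) ∘ i.succAbove),
        f (i.insertNth ((1 : Fin (m+1) → ℝ) i) x) i) = 0 := by
      simp only [hzero1]
      exact integral_zero _ _
    have e0 : (∫ x in Set.Icc ((0 : Fin (m+1) → ℝ) ∘ i.succAbove) ((1 : Fin (m+1) → ℝ) ∘ i.succAbove),
        f (i.insertNth ((0 : Fin (m+1) → ℝ) i) x) i) = 0 := by
      simp only [hzero0]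
      exact integral_zero _ _
    rw [e1, e0, sub_zero]
  calc ∫ y in unitCube (m+1), ∑ i, Φ y i * pdn i Ψ y
      = ∫ y in Set.Icc (0 : Fin (m+1) → ℝ) 1, ∑ i, Φ y i * pdn i Ψ y := by
        rw [restrict_Icc_eq_restrict_unitCube]
    _ = ∫ x in Set.Icc (0 : Fin (m+1) → ℝ) 1, ∑ i, f' x (Pi.single i 1) i :=
        integral_congr_ae haeeq.symm
    _ = 0 := hIcc0

lemma rho_maps_bigCube {x : Fin n → ℝ} (hx : x ∈ bigCube n) :
    (fun j => rho (x j)) ∈ Set.Icc (0 : Fin n → ℝ) 1 :=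
  Set.mem_Icc.2 ⟨fun j => (rho_mem (hx j)).1, fun j => (rho_mem (hx j)).2⟩

lemma continuousOn_rhoPhi (Φ : (Fin n → ℝ) → (Fin n → ℝ))
    (hΦc : ContinuousOn Φ (closure (unitCube n))) :
    ContinuousOn (fun x : Fin n → ℝ => Φ (fun j => rho (x j))) (bigCube n) := by
  apply hΦc.comp
  · exact (continuous_pi fun j => rho_cont.comp (continuous_apply j)).continuousOn
  · intro x hx
    rw [closure_unitCube]
    exact rho_maps_bigCube hx

lemma aesm_Ext (Φ : (Fin n → ℝ) → (Fin n → ℝ))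
    (hΦc : ContinuousOn Φ (closure (unitCube n))) :
    AEStronglyMeasurable (Ext n Φ) (volume.restrict (bigCube n)) := by
  have hrepr : Ext n Φ = fun x => (∏ j, sg (x j)) •
      ((fun i => sg (x i)) * Φ (fun j => rho (x j))) := by
    funext x i
    simp only [Ext, Pi.smul_apply, Pi.mul_apply, smul_eq_mul]
    ring
  rw [hrepr]
  have h2 : AEStronglyMeasurable (fun x : Fin n → ℝ => Φ (fun j => rho (x j)))
      (volume.restrict (bigCube n)) :=
    (continuousOn_rhoPhi Φ hΦc).aestronglyMeasurable isOpen_bigCube.measurableSet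
  have h3 : Measurable (fun x : Fin n → ℝ => ∏ j, sg (x j)) :=
    Finset.measurable_prod _ fun j _ => sg_meas.comp (measurable_pi_apply j)
  have h4 : Measurable (fun x : Fin n → ℝ => fun i => sg (x i)) :=
    measurable_pi_iff.2 fun i => sg_meas.comp (measurable_pi_apply i)
  exact h3.aestronglyMeasurable.smul (h4.aestronglyMeasurable.mul h2)

lemma norm_bound (Φ : (Fin n → ℝ) → (Fin n → ℝ))
    (hΦc : ContinuousOn Φ (closure (unitCube n))) :
    ∃ M : ℝ, 0 ≤ M ∧ ∀ x ∈ bigCube n, ‖Ext n Φ x‖ ≤ M := by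
  obtain ⟨M, hM⟩ := (isCompact_Icc (a := (0 : Fin n → ℝ)) (b := 1)).exists_bound_of_continuousOn
    (closure_unitCube ▸ hΦc)
  refine ⟨max M 0, le_max_right _ _, fun x hx => ?_⟩
  rw [norm_Ext]
  exact le_trans (hM _ (rho_maps_bigCube hx)) (le_max_left _ _)

instance finiteMeasure_bigCube : IsFiniteMeasure (volume.restrict (bigCube n)) := by
  constructor
  rw [Measure.restrict_apply_univ, volume_bigCube]
  exact ENNReal.pow_lt_top (lt_top_iff_ne_top.2 (by norm_num))

lemma integrableOn_Ext (Φ : (Fin n → ℝ) → (Fin n → ℝ))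
    (hΦc : ContinuousOn Φ (closure (unitCube n))) :
    IntegrableOn (Ext n Φ) (bigCube n) := by
  obtain ⟨M, hM0, hM⟩ := norm_bound Φ hΦc
  refine ⟨aesm_Ext Φ hΦc, ?_⟩
  apply MeasureTheory.HasFiniteIntegral.of_bounded (C := M)
  filter_upwards [ae_restrict_mem isOpen_bigCube.measurableSet] with x hx
  exact hM x hx

lemma cell_integral (Φ : (Fin n → ℝ) → (Fin n → ℝ)) (φ : (Fin n → ℝ) → ℝ)
    (hφ : ContDiff ℝ (⊤ : ℕ∞) φ) (σ : Fin n → Fin 3) :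
    ∫ x in cell σ, (∑ j, Ext n Φ x j * pdn j φ x)
      = (∏ j, ee (σ j)) * ∫ y in unitCube n, ∑ i, Φ y i * pdn i (fun z => φ (Tm σ z)) y := by
  have hφd : Differentiable ℝ φ := hφ.differentiable (by simp)
  have hstep1 : ∫ x in cell σ, (∑ j, Ext n Φ x j * pdn j φ x)
      = ∫ x in cell σ,
        (fun y => ∑ i, ((ee (σ i) * ∏ j, ee (σ j)) * Φ y i) * pdn i φ (Tm σ y)) (Tm σ x) := by
    apply setIntegral_congr_fun (isOpen_cell σ).measurableSet
    intro x hx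
    simp only
    refine Finset.sum_congr rfl fun i _ => ?_
    rw [Ext_on_cell Φ σ hx i, Tm_invol]
  rw [hstep1, show cell σ = Tm σ ⁻¹' unitCube n from rfl]
  have h4 := (measurePreserving_Tm σ).setIntegral_preimage_emb (measurableEmbedding_Tm σ)
    (fun y => ∑ i, ((ee (σ i) * ∏ j, ee (σ j)) * Φ y i) * pdn i φ (Tm σ y)) (unitCube n)
  rw [h4, ← integral_const_mul]
  apply setIntegral_congr_fun isOpen_unitCube.measurableSet
  intro y hy
  show (∑ i, (ee (σ i) * ∏ j, ee (σ j)) * Φ y i * pdn i φ (Tm σ y))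
      = (∏ j, ee (σ j)) * ∑ i, Φ y i * pdn i (fun z => φ (Tm σ z)) y
  rw [Finset.mul_sum]
  refine Finset.sum_congr rfl fun i _ => ?_
  rw [pdn_comp φ hφd σ i y]
  ring

lemma cell_lintegral (Φ : (Fin n → ℝ) → (Fin n → ℝ)) (σ : Fin n → Fin 3) :
    ∫⁻ x in cell σ, (‖Ext n Φ x‖₊ : ℝ≥0∞) = ∫⁻ y in unitCube n, (‖Φ y‖₊ : ℝ≥0∞) := by
  have h1 : ∫⁻ x in cell σ, (‖Ext n Φ x‖₊ : ℝ≥0∞)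
      = ∫⁻ x in cell σ, (fun y => (‖Φ y‖₊ : ℝ≥0∞)) (Tm σ x) := by
    apply setLIntegral_congr_fun (isOpen_cell σ).measurableSet
    intro x hx
    have hmem : ∀ j, x j ∈ II (σ j) := by
      rw [cell_eq_pi] at hx
      exact fun j => hx j (Set.mem_univ j)
    have h2 : (fun j => rho (x j)) = Tm σ x := funext fun j => rho_eq (hmem j)
    have h3 : ‖Ext n Φ x‖₊ = ‖Φ (fun j => rho (x j))‖₊ :=
      NNReal.eq (by rw [coe_nnnorm, coe_nnnorm]; exact norm_Ext Φ x)
    simp only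
    rw [h3, h2]
  rw [h1, show cell σ = Tm σ ⁻¹' unitCube n from rfl]
  exact (measurePreserving_Tm σ).setLIntegral_comp_preimage_emb (measurableEmbedding_Tm σ)
    (fun y => (‖Φ y‖₊ : ℝ≥0∞)) (unitCube n)

end

end SolExt

/-- There is a linear extension operator `E` from
`C(closure (0,1)ⁿ; ℝⁿ) ∩ C¹((0,1)ⁿ; ℝⁿ)` to `L¹((-1,2)ⁿ; ℝⁿ)` such that `EΦ = Φ` on
`(0,1)ⁿ`, `div Φ = 0` in `(0,1)ⁿ` implies `div(EΦ) = 0` distributionally on `(-1,2)ⁿ`,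
and `‖EΦ‖_{L¹((-1,2)ⁿ)} ≤ 3ⁿ ‖Φ‖_{L¹((0,1)ⁿ)}`. -/
theorem solenoidal_extension (n : ℕ) (hn : 0 < n) :
    ∃ E : ((Fin n → ℝ) → (Fin n → ℝ)) → ((Fin n → ℝ) → (Fin n → ℝ)),
      (∀ f g, E (f + g) = E f + E g) ∧
      (∀ (a : ℝ) f, E (a • f) = a • E f) ∧
      ∀ Φ : (Fin n → ℝ) → (Fin n → ℝ),
        ContinuousOn Φ (closure (unitCube n)) → ContDiffOn ℝ 1 Φ (unitCube n) →
          (∀ x ∈ unitCube n, E Φ x = Φ x) ∧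
          IntegrableOn (E Φ) (bigCube n) ∧
          ((∀ x ∈ unitCube n, ∑ j, pdn j (fun y => Φ y j) x = 0) →
            ∀ φ : (Fin n → ℝ) → ℝ, ContDiff ℝ (⊤ : ℕ∞) φ → HasCompactSupport φ →
              tsupport φ ⊆ bigCube n →
                ∫ x in bigCube n, (∑ j, E Φ x j * pdn j φ x) = 0) ∧
          eLpNorm (E Φ) 1 (volume.restrict (bigCube n)) ≤
            3 ^ n * eLpNorm Φ 1 (volume.restrict (unitCube n)) := by
  classical
  obtain ⟨m, rfl⟩ : ∃ m, n = m + 1 := ⟨n - 1, (Nat.succ_pred_eq_of_pos hn).symm⟩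
  clear hn
  refine ⟨SolExt.Ext (m+1), ?_, ?_, ?_⟩
  · intro f g
    funext x i
    simp only [SolExt.Ext, Pi.add_apply]
    ring
  · intro a f
    funext x i
    simp only [SolExt.Ext, Pi.smul_apply, smul_eq_mul]
    ring
  intro Φ hΦc hΦd
  have hrestrict : volume.restrict (bigCube (m+1))
      = volume.restrict (⋃ σ : Fin (m+1) → Fin 3, SolExt.cell σ) :=
    Measure.restrict_congr_set SolExt.bigCube_ae_eq_iUnion
  refine ⟨fun x hx => SolExt.Ext_on_unitCube Φ hx, SolExt.integrableOn_Ext Φ hΦc, ?_, ?_⟩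
  · -- divergence-free extension
    intro hdiv φ hφ hφsupp hφsub
    have hsupp0 : ∀ z, z ∉ bigCube (m+1) → φ z = 0 := fun z hz =>
      image_eq_zero_of_notMem_tsupport (fun hmem => hz (hφsub hmem))
    -- integrability of the integrand on bigCube
    obtain ⟨M, hM0, hM⟩ := SolExt.norm_bound Φ hΦc
    have hpdnC : ∀ j : Fin (m+1), ∃ C : ℝ, ∀ x, ‖pdn j φ x‖ ≤ C := by
      intro j
      have hsupp : HasCompactSupport (pdn j φ) := hφsupp.fderiv_apply ℝ (Pi.single j 1)
      exact hsupp.exists_bound_of_continuous (SolExt.cont_pdn hφ j)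
    choose C hC using hpdnC
    have haesm : AEStronglyMeasurable (fun x => ∑ j, SolExt.Ext (m+1) Φ x j * pdn j φ x)
        (volume.restrict (bigCube (m+1))) := by
      apply Finset.aestronglyMeasurable_fun_sum
      intro j _
      have h1 : AEStronglyMeasurable (fun x => SolExt.Ext (m+1) Φ x j)
          (volume.restrict (bigCube (m+1))) :=
        (continuous_apply j).comp_aestronglyMeasurable (SolExt.aesm_Ext Φ hΦc)
      exact h1.mul (SolExt.cont_pdn hφ j).aestronglyMeasurable
    have hint : IntegrableOn (fun x => ∑ j, SolExt.Ext (m+1) Φ x j * pdn j φ x)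
        (bigCube (m+1)) := by
      refine ⟨haesm, ?_⟩
      apply MeasureTheory.HasFiniteIntegral.of_bounded (C := ∑ j : Fin (m+1), M * C j)
      filter_upwards [ae_restrict_mem SolExt.isOpen_bigCube.measurableSet] with x hx
      calc ‖∑ j, SolExt.Ext (m+1) Φ x j * pdn j φ x‖
          ≤ ∑ j, ‖SolExt.Ext (m+1) Φ x j * pdn j φ x‖ := norm_sum_le _ _
        _ ≤ ∑ j : Fin (m+1), M * C j := by
            apply Finset.sum_le_sum
            intro j _
            rw [norm_mul]
            apply mul_le_mul
            · exact le_trans (norm_le_pi_norm _ j) (hM x hx)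
            · exact hC j x
            · exact norm_nonneg _
            · exact hM0
    have hint' : Integrable (fun x => ∑ j, SolExt.Ext (m+1) Φ x j * pdn j φ x)
        (volume.restrict (⋃ σ : Fin (m+1) → Fin 3, SolExt.cell σ)) := by
      rw [← hrestrict]; exact hint
    -- decompose the integral into cells
    have hsplit : ∫ x in bigCube (m+1), (∑ j, SolExt.Ext (m+1) Φ x j * pdn j φ x)
        = ∑ σ : Fin (m+1) → Fin 3,
            ∫ x in SolExt.cell σ, (∑ j, SolExt.Ext (m+1) Φ x j * pdn j φ x) := by
      rw [show (∫ x in bigCube (m+1), (∑ j, SolExt.Ext (m+1) Φ x j * pdn j φ x))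
          = ∫ x in (⋃ σ : Fin (m+1) → Fin 3, SolExt.cell σ),
              (∑ j, SolExt.Ext (m+1) Φ x j * pdn j φ x) from by rw [hrestrict]]
      rw [integral_iUnion (fun σ => (SolExt.isOpen_cell σ).measurableSet)
        SolExt.cell_disjoint hint']
      exact tsum_fintype _
    rw [hsplit]
    have hcell : ∀ σ : Fin (m+1) → Fin 3,
        ∫ x in SolExt.cell σ, (∑ j, SolExt.Ext (m+1) Φ x j * pdn j φ x)
          = (∏ j, SolExt.ee (σ j)) *
            ∫ y in unitCube (m+1), ∑ i, Φ y i * pdn i (fun z => φ (SolExt.Tm σ z)) y :=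
      fun σ => SolExt.cell_integral Φ φ hφ σ
    rw [Finset.sum_congr rfl fun σ _ => hcell σ]
    -- integrability of each summand over the unit cube
    have hGint : ∀ σ : Fin (m+1) → Fin 3,
        IntegrableOn (fun y => (∏ j, SolExt.ee (σ j)) *
          ∑ i, Φ y i * pdn i (fun z => φ (SolExt.Tm σ z)) y) (unitCube (m+1)) := by
      intro σ
      have hcont : ContinuousOn (fun y => (∏ j, SolExt.ee (σ j)) *
          ∑ i, Φ y i * pdn i (fun z => φ (SolExt.Tm σ z)) y)
          (Set.Icc (0 : Fin (m+1) → ℝ) 1) := by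
        apply ContinuousOn.mul continuousOn_const
        apply continuousOn_finset_sum
        intro i _
        exact ((continuous_apply i).comp_continuousOn
          (SolExt.closure_unitCube ▸ hΦc)).mul
          ((SolExt.cont_pdn (hφ.comp (SolExt.contDiff_Tm σ)) i).continuousOn)
      exact (hcont.integrableOn_compact isCompact_Icc).mono_set SolExt.unitCube_subset_Icc
    calc ∑ σ : Fin (m+1) → Fin 3, (∏ j, SolExt.ee (σ j)) *
            ∫ y in unitCube (m+1), ∑ i, Φ y i * pdn i (fun z => φ (SolExt.Tm σ z)) y
        = ∑ σ : Fin (m+1) → Fin 3, ∫ y in unitCube (m+1), (∏ j, SolExt.ee (σ j)) *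
            ∑ i, Φ y i * pdn i (fun z => φ (SolExt.Tm σ z)) y := by
          exact Finset.sum_congr rfl fun σ _ => (integral_const_mul _ _).symm
      _ = ∫ y in unitCube (m+1), ∑ σ : Fin (m+1) → Fin 3, (∏ j, SolExt.ee (σ j)) *
            ∑ i, Φ y i * pdn i (fun z => φ (SolExt.Tm σ z)) y :=
          (integral_finset_sum _ fun σ _ => hGint σ).symm
      _ = ∫ y in unitCube (m+1), ∑ i, Φ y i * pdn i (SolExt.Psi (m+1) φ) y := by
          apply setIntegral_congr_fun SolExt.isOpen_unitCube.measurableSet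
          intro y hy
          show (∑ σ : Fin (m+1) → Fin 3, (∏ j, SolExt.ee (σ j)) *
              ∑ i, Φ y i * pdn i (fun z => φ (SolExt.Tm σ z)) y)
            = ∑ i, Φ y i * pdn i (SolExt.Psi (m+1) φ) y
          have hR : ∑ i, Φ y i * pdn i (SolExt.Psi (m+1) φ) y
              = ∑ σ : Fin (m+1) → Fin 3, (∏ j, SolExt.ee (σ j)) *
                  ∑ i, Φ y i * pdn i (fun z => φ (SolExt.Tm σ z)) y := by
            simp only [SolExt.pdn_Psi φ hφ]
            simp only [Finset.mul_sum]
            rw [Finset.sum_comm]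
            refine Finset.sum_congr rfl fun σ _ => Finset.sum_congr rfl fun i _ => by ring
          exact hR.symm
      _ = 0 := SolExt.key_div m Φ hΦc hΦd hdiv (SolExt.Psi (m+1) φ)
          (SolExt.contDiff_Psi φ hφ)
          (fun y k hy => SolExt.Psi_vanish φ hsupp0 y k hy)
  · -- L¹ bound
    rw [eLpNorm_one_eq_lintegral_enorm, eLpNorm_one_eq_lintegral_enorm]
    simp only [enorm_eq_nnnorm]
    rw [hrestrict]
    rw [show (∫⁻ x, (‖SolExt.Ext (m+1) Φ x‖₊ : ℝ≥0∞)
          ∂(volume.restrict (⋃ σ : Fin (m+1) → Fin 3, SolExt.cell σ)))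
        = ∑' σ : Fin (m+1) → Fin 3, ∫⁻ x in SolExt.cell σ, (‖SolExt.Ext (m+1) Φ x‖₊ : ℝ≥0∞)
      from lintegral_iUnion (fun σ => (SolExt.isOpen_cell σ).measurableSet)
        SolExt.cell_disjoint _]
    rw [tsum_fintype]
    rw [Finset.sum_congr rfl fun σ _ => SolExt.cell_lintegral Φ σ]
    rw [Finset.sum_const, Finset.card_univ, Fintype.card_fun, Fintype.card_fin, Fintype.card_fin]
    rw [nsmul_eq_mul]
    rw [Nat.cast_pow]
    norm_num
end

section
/- One-step reflection preserves solenoidality: let Ψ : (0,1)ⁿ → ℝⁿ be continuous on the closed cube, C¹ inside, with div(Ψ) = 0. Define EΨ on (-1,1) × (0,1)^{n-1} by EΨ = Ψ for x₁ ∈ (0,1), and for x₁ ∈ (-1,0) set (EΨ)₁(x₁, x') := Ψ₁(-x₁, x') and (EΨ)ⱼ(x₁, x') := -Ψⱼ(-x₁, x') for j ≥ 2. Then ∫ ⟨EΨ, ∇φ⟩ dx = 0 for every φ ∈ C_c^∞((-1,1) × (0,1)^{n-1}), i.e., EΨ is distributionally divergence-free. -/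
open MeasureTheory
open scoped ENNReal

/-- The reflected domain `(-1,1) × (0,1)^{n-1}` (first coordinate indexed by `0`). -/
def reflDomain (n : ℕ) : Set (Fin (n + 1) → ℝ) :=
  {x | x 0 ∈ Set.Ioo (-1 : ℝ) 1 ∧ ∀ j, j ≠ 0 → x j ∈ Set.Ioo (0 : ℝ) 1}

/-- Reflection of the first coordinate. -/
def reflPt {n : ℕ} (x : Fin (n + 1) → ℝ) : Fin (n + 1) → ℝ :=
  Function.update x 0 (-(x 0))

/-- One-step reflection extension: `EΨ = Ψ` for `x₁ ≥ 0`, while for `x₁ < 0` the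
first component is reflected evenly and the others oddly. -/
noncomputable def reflExt {n : ℕ} (Ψ : (Fin (n + 1) → ℝ) → (Fin (n + 1) → ℝ))
    (x : Fin (n + 1) → ℝ) : Fin (n + 1) → ℝ :=
  if 0 ≤ x 0 then Ψ x
  else fun j => if j = 0 then Ψ (reflPt x) 0 else -(Ψ (reflPt x) j)

section Aux
open Set

lemma unitCube_eq_pi (n : ℕ) :
    unitCube n = Set.pi Set.univ (fun _ : Fin n => Set.Ioo (0:ℝ) 1) := by
  ext x; simp [unitCube, Set.mem_pi]

lemma isOpen_unitCube (n : ℕ) : IsOpen (unitCube n) := by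
  rw [unitCube_eq_pi]; exact isOpen_set_pi Set.finite_univ (fun _ _ => isOpen_Ioo)

lemma measurableSet_unitCube (n : ℕ) : MeasurableSet (unitCube n) :=
  (isOpen_unitCube n).measurableSet

lemma closure_unitCube (n : ℕ) : closure (unitCube n) = Set.Icc (0 : Fin n → ℝ) 1 := by
  rw [unitCube_eq_pi, closure_pi_set, ← Set.pi_univ_Icc]
  refine congrArg (Set.pi Set.univ) ?_; funext i; simp [closure_Ioo (zero_ne_one (α := ℝ))]

lemma unitCube_ae_Icc (n : ℕ) :
    unitCube n =ᵐ[volume] Set.Icc (0 : Fin n → ℝ) 1 := by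
  rw [unitCube_eq_pi]
  exact (MeasureTheory.Measure.univ_pi_Ioo_ae_eq_Icc
    (μ := fun _ : Fin n => (volume : Measure ℝ)) (f := fun _ => (0:ℝ)) (g := fun _ => (1:ℝ)))

lemma reflPt_apply {n : ℕ} (x : Fin (n + 1) → ℝ) (j : Fin (n + 1)) :
    reflPt x j = if j = 0 then -(x 0) else x j := by
  simp [reflPt, Function.update_apply]

lemma reflPt_involutive {n : ℕ} : Function.Involutive (reflPt (n := n)) := by
  intro x; funext j
  by_cases h : j = 0 <;> simp [reflPt_apply, h]

noncomputable def reflL (n : ℕ) : (Fin (n+1) → ℝ) →L[ℝ] (Fin (n+1) → ℝ) :=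
  (LinearMap.pi (fun j : Fin (n+1) =>
    if j = 0 then -(LinearMap.proj 0 : ((Fin (n+1)) → ℝ) →ₗ[ℝ] ℝ)
    else LinearMap.proj j)).toContinuousLinearMap

lemma reflL_apply {n : ℕ} (x : Fin (n+1) → ℝ) : reflL n x = reflPt x := by
  funext j
  by_cases h : j = 0 <;>
    simp [reflL, LinearMap.pi_apply, h, reflPt_apply]

lemma continuous_reflPt (n : ℕ) : Continuous (reflPt (n := n)) := by
  have : (reflPt (n := n)) = ⇑(reflL n) := by funext x; rw [reflL_apply]
  rw [this]; exact (reflL n).continuous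

noncomputable def reflE (n : ℕ) : (Fin (n+1) → ℝ) ≃ᵐ (Fin (n+1) → ℝ) where
  toFun := reflPt
  invFun := reflPt
  left_inv := reflPt_involutive
  right_inv := reflPt_involutive
  measurable_toFun := (continuous_reflPt n).measurable
  measurable_invFun := (continuous_reflPt n).measurable

lemma measurePreserving_reflPt (n : ℕ) :
    MeasurePreserving (reflPt (n := n)) volume volume := by
  have hf : ∀ j : Fin (n+1), MeasurePreserving
      (fun t : ℝ => if j = 0 then -t else t) volume volume := by
    intro j
    by_cases h : j = 0
    · simpa [h] using Measure.measurePreserving_neg (volume : Measure ℝ)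
    · simp only [h, ↓reduceIte]; exact MeasurePreserving.id (volume : Measure ℝ)
  have H := MeasureTheory.volume_preserving_pi hf
  convert H using 1
  · rfl
  · rfl
  funext x; funext j
  by_cases h : j = 0 <;> simp [reflPt_apply, h]

section chain
variable {n : ℕ} {φ : (Fin (n + 1) → ℝ) → ℝ}

lemma reflL_single_zero (n : ℕ) :
    reflL n (Pi.single (0 : Fin (n+1)) 1) = -(Pi.single (0 : Fin (n+1)) (1:ℝ)) := by
  funext k
  rw [reflL_apply, reflPt_apply]
  by_cases h : k = 0 <;> simp [h, Pi.single_apply]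

lemma reflL_single_ne (n : ℕ) (j : Fin (n+1)) (hj : j ≠ 0) :
    reflL n (Pi.single j 1) = Pi.single j (1:ℝ) := by
  funext k
  rw [reflL_apply, reflPt_apply]
  by_cases h : k = 0 <;> simp [h, Pi.single_apply, (by simpa [eq_comm] using hj : ¬ (0:Fin (n+1)) = j)]

lemma contDiff_comp_reflPt (hφ : ContDiff ℝ (⊤ : ℕ∞) φ) :
    ContDiff ℝ (⊤ : ℕ∞) (fun x => φ (reflPt x)) := by
  have : (fun x => φ (reflPt x)) = φ ∘ ⇑(reflL n) := by
    funext x; simp [Function.comp, reflL_apply]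
  rw [this]
  exact hφ.comp (reflL n).contDiff

lemma fderiv_comp_reflPt (hφ : ContDiff ℝ (⊤ : ℕ∞) φ) (x : Fin (n+1) → ℝ) (v : Fin (n+1) → ℝ) :
    fderiv ℝ (fun y => φ (reflPt y)) x v = fderiv ℝ φ (reflPt x) (reflL n v) := by
  have h1 : (fun y => φ (reflPt y)) = φ ∘ ⇑(reflL n) := by
    funext y; simp [Function.comp, reflL_apply]
  rw [h1, fderiv_comp (x := x) (hφ.differentiable (by simp) _) ((reflL n).differentiableAt)]
  simp [(reflL n).fderiv, reflL_apply]

lemma pdn_comp_reflPt_zero (hφ : ContDiff ℝ (⊤ : ℕ∞) φ) (x : Fin (n+1) → ℝ) :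
    pdn 0 (fun y => φ (reflPt y)) x = -(pdn 0 φ (reflPt x)) := by
  rw [pdn, fderiv_comp_reflPt hφ, reflL_single_zero, map_neg]; rfl

lemma pdn_comp_reflPt_ne (hφ : ContDiff ℝ (⊤ : ℕ∞) φ) (j : Fin (n+1)) (hj : j ≠ 0)
    (x : Fin (n+1) → ℝ) :
    pdn j (fun y => φ (reflPt y)) x = pdn j φ (reflPt x) := by
  rw [pdn, fderiv_comp_reflPt hφ, reflL_single_ne n j hj]; rfl

/-- `ψ = φ - φ ∘ reflPt`. -/
noncomputable def psiFun {n : ℕ} (φ : (Fin (n + 1) → ℝ) → ℝ) (x : Fin (n+1) → ℝ) : ℝ :=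
  φ x - φ (reflPt x)

lemma contDiff_psiFun (hφ : ContDiff ℝ (⊤ : ℕ∞) φ) : ContDiff ℝ (⊤ : ℕ∞) (psiFun φ) :=
  hφ.sub (contDiff_comp_reflPt hφ)

lemma pdn_psiFun (hφ : ContDiff ℝ (⊤ : ℕ∞) φ) (j : Fin (n+1)) (x : Fin (n+1) → ℝ) :
    pdn j (psiFun φ) x =
      pdn j φ x - (if j = 0 then -(pdn 0 φ (reflPt x)) else pdn j φ (reflPt x)) := by
  have hd1 : DifferentiableAt ℝ φ x := (hφ.differentiable (by simp)) x
  have hd2 : DifferentiableAt ℝ (fun y => φ (reflPt y)) x :=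
    ((contDiff_comp_reflPt hφ).differentiable (by simp)) x
  have : pdn j (psiFun φ) x = pdn j φ x - pdn j (fun y => φ (reflPt y)) x := by
    unfold pdn psiFun
    rw [fderiv_fun_sub hd1 hd2]; rfl
  rw [this]
  by_cases h : j = 0
  · subst h; rw [pdn_comp_reflPt_zero hφ]; simp
  · rw [pdn_comp_reflPt_ne hφ j h]; simp [h]

lemma psiFun_zero_of_fst_zero (x : Fin (n+1) → ℝ) (hx : x 0 = 0) : psiFun φ x = 0 := by
  have : reflPt x = x := by
    funext j; by_cases h : j = 0 <;> simp [reflPt_apply, h, hx]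
  simp [psiFun, this]

lemma psiFun_zero_of_not_mem (hsupp : tsupport φ ⊆ reflDomain n) (x : Fin (n+1) → ℝ)
    (hx : x ∉ reflDomain n) (hx' : reflPt x ∉ reflDomain n) : psiFun φ x = 0 := by
  have h1 : φ x = 0 := image_eq_zero_of_notMem_tsupport (fun h => hx (hsupp h))
  have h2 : φ (reflPt x) = 0 := image_eq_zero_of_notMem_tsupport (fun h => hx' (hsupp h))
  simp [psiFun, h1, h2]

end chain

section divthm
variable {n : ℕ}

lemma unitCube_eq_pi' (n : ℕ) :
    (Set.pi Set.univ fun i : Fin (n+1) => Ioo ((0:Fin (n+1) → ℝ) i) ((1:Fin (n+1) → ℝ) i))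
      = unitCube (n+1) := by
  rw [unitCube_eq_pi]; rfl

lemma integral_unitCube_div_zero
    (Ψ : (Fin (n + 1) → ℝ) → (Fin (n + 1) → ℝ))
    (hc' : ContinuousOn Ψ (Set.Icc (0 : Fin (n+1) → ℝ) 1))
    (hc1 : ContDiffOn ℝ 1 Ψ (unitCube (n + 1)))
    (hdiv : ∀ x ∈ unitCube (n + 1), ∑ j, pdn j (fun y => Ψ y j) x = 0)
    (ψ : (Fin (n + 1) → ℝ) → ℝ) (hψ : ContDiff ℝ (⊤ : ℕ∞) ψ)
    (hvan : ∀ x : Fin (n+1) → ℝ, ((∃ i, x i = 1) ∨ (∃ i, i ≠ 0 ∧ x i = 0)) → ψ x = 0)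
    (hzero : ∀ x : Fin (n+1) → ℝ, x 0 = 0 → ψ x = 0) :
    ∫ x in unitCube (n+1), ∑ j, Ψ x j * pdn j ψ x = 0 := by
  classical
  set H : (Fin (n+1) → ℝ) → ℝ := fun x => ∑ j, Ψ x j * pdn j ψ x with hH
  have hψd : Differentiable ℝ ψ := hψ.differentiable (by simp)
  have hψc : Continuous (fun x => fderiv ℝ ψ x) := hψ.continuous_fderiv (by simp)
  have hpdnc : ∀ j : Fin (n+1), Continuous (fun x => pdn j ψ x) := fun j =>
    hψc.clm_apply continuous_const
  have hHc : ContinuousOn H (Set.Icc (0 : Fin (n+1) → ℝ) 1) := by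
    apply continuousOn_finset_sum
    intro j _
    exact (((continuous_apply j).comp_continuousOn hc')).mul ((hpdnc j).continuousOn)
  have hHint : IntegrableOn H (Set.Icc (0 : Fin (n+1) → ℝ) 1) :=
    hHc.integrableOn_compact isCompact_Icc
  set f : Fin (n+1) → (Fin (n+1) → ℝ) → ℝ := fun i x => Ψ x i * ψ x with hf
  set f' : Fin (n+1) → (Fin (n+1) → ℝ) → (Fin (n+1) → ℝ) →L[ℝ] ℝ := fun i x =>
    if x ∈ unitCube (n+1) then
      Ψ x i • fderiv ℝ ψ x + ψ x • fderiv ℝ (fun y => Ψ y i) x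
    else 0 with hf'
  have hrestr : volume.restrict (unitCube (n+1)) =
      volume.restrict (Set.Icc (0 : Fin (n+1) → ℝ) 1) :=
    Measure.restrict_congr_set (unitCube_ae_Icc (n+1))
  -- derivative facts inside the cube
  have hderiv : ∀ x ∈ unitCube (n+1), ∀ i, HasFDerivAt (f i) (f' i x) x := by
    intro x hx i
    have hΨ : DifferentiableAt ℝ Ψ x :=
      (hc1.differentiableOn one_ne_zero).differentiableAt ((isOpen_unitCube _).mem_nhds hx)
    have hΨi : DifferentiableAt ℝ (fun y => Ψ y i) x :=
      (ContinuousLinearMap.proj (R := ℝ) (φ := fun _ : Fin (n+1) => ℝ)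
        i).differentiableAt.comp x hΨ
    have h1 := hΨi.hasFDerivAt.mul (hψd x).hasFDerivAt
    simp only [hf', if_pos hx]; exact h1
  -- divergence equals H on the cube
  have hdivH : ∀ x ∈ unitCube (n+1),
      (∑ i, f' i x (Pi.single i 1)) = H x := by
    intro x hx
    have hΨ : DifferentiableAt ℝ Ψ x :=
      (hc1.differentiableOn one_ne_zero).differentiableAt ((isOpen_unitCube _).mem_nhds hx)
    simp only [hf', if_pos hx, ContinuousLinearMap.add_apply, ContinuousLinearMap.smul_apply,
      smul_eq_mul]
    rw [Finset.sum_add_distrib]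
    have h2 : ∑ i : Fin (n+1), ψ x * fderiv ℝ (fun y => Ψ y i) x (Pi.single i 1) = 0 := by
      rw [← Finset.mul_sum]
      have := hdiv x hx
      simp only [pdn] at this
      rw [this, mul_zero]
    rw [hH]
    simp only [pdn]
    rw [h2, add_zero]
  -- integrability of the chosen divergence
  have hae : (fun x => ∑ i, f' i x (Pi.single i 1)) =ᵐ[volume.restrict (Set.Icc (0 : Fin (n+1) → ℝ) 1)] H := by
    rw [← hrestr]
    filter_upwards [ae_restrict_mem (measurableSet_unitCube (n+1))] with x hx
    exact hdivH x hx
  have hgint : IntegrableOn (fun x => ∑ i, f' i x (Pi.single i 1))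
      (Set.Icc (0 : Fin (n+1) → ℝ) 1) := hHint.congr_fun_ae hae.symm
  have hle : (0 : Fin (n+1) → ℝ) ≤ 1 := fun _ => zero_le_one
  have Hc : ∀ i, ContinuousOn (f i) (Set.Icc (0 : Fin (n+1) → ℝ) 1) := fun i =>
    (((continuous_apply i).comp_continuousOn hc')).mul (hψ.continuous.continuousOn)
  have Hd : ∀ x ∈ (Set.pi Set.univ fun i : Fin (n+1) =>
      Ioo ((0:Fin (n+1) → ℝ) i) ((1:Fin (n+1) → ℝ) i)) \ (∅ : Set (Fin (n+1) → ℝ)),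
      ∀ i, HasFDerivAt (f i) (f' i x) x := by
    intro x hx i
    exact hderiv x (by rw [← unitCube_eq_pi']; exact hx.1) i
  have key := integral_divergence_of_hasFDerivAt_off_countable'
    (0 : Fin (n+1) → ℝ) 1 hle f f' ∅ Set.countable_empty Hc Hd hgint
  -- all face integrals vanish
  have hfaces : ∀ i : Fin (n+1), ∀ c : ℝ, (c = 1 ∨ c = 0) →
      ∀ x : Fin n → ℝ, f i (i.insertNth c x) = 0 := by
    intro i c hc01 x
    have hsame : (Fin.insertNth i c x : Fin (n+1) → ℝ) i = c := by simp
    have hψ0 : ψ (i.insertNth c x) = 0 := by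
      rcases hc01 with h1 | h0
      · exact hvan _ (Or.inl ⟨i, by rw [hsame, h1]⟩)
      · by_cases hi : i = 0
        · exact hzero _ (by rw [← hi, hsame, h0])
        · exact hvan _ (Or.inr ⟨i, hi, by rw [hsame, h0]⟩)
    simp [hf, hψ0]
  have hzero_rhs : ∑ i : Fin (n+1),
      ((∫ x in Set.Icc ((0:Fin (n+1) → ℝ) ∘ i.succAbove) ((1:Fin (n+1) → ℝ) ∘ i.succAbove),
          f i (i.insertNth ((1:Fin (n+1) → ℝ) i) x)) -
        ∫ x in Set.Icc ((0:Fin (n+1) → ℝ) ∘ i.succAbove) ((1:Fin (n+1) → ℝ) ∘ i.succAbove),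
          f i (i.insertNth ((0:Fin (n+1) → ℝ) i) x)) = 0 := by
    apply Finset.sum_eq_zero
    intro i _
    have h1 : (fun x : Fin n → ℝ => f i (i.insertNth ((1:Fin (n+1) → ℝ) i) x)) = fun _ => (0:ℝ) :=
      funext fun x => hfaces i _ (Or.inl rfl) x
    have h0 : (fun x : Fin n → ℝ => f i (i.insertNth ((0:Fin (n+1) → ℝ) i) x)) = fun _ => (0:ℝ) :=
      funext fun x => hfaces i _ (Or.inr rfl) x
    rw [h1, h0]
    simp
  rw [hzero_rhs] at key
  -- transfer from Icc to the open cube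
  calc ∫ x in unitCube (n+1), H x
      = ∫ x in Set.Icc (0 : Fin (n+1) → ℝ) 1, H x := by rw [setIntegral_congr_set (unitCube_ae_Icc (n+1))]
    _ = ∫ x in Set.Icc (0 : Fin (n+1) → ℝ) 1, ∑ i, f' i x (Pi.single i 1) :=
        (integral_congr_ae hae).symm
    _ = 0 := key
end divthm

section main
variable {n : ℕ}

def Dminus (n : ℕ) : Set (Fin (n + 1) → ℝ) :=
  {x | x 0 ∈ Set.Ioo (-1 : ℝ) 0 ∧ ∀ j, j ≠ 0 → x j ∈ Set.Ioo (0 : ℝ) 1}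

lemma Dminus_eq_pi (n : ℕ) : Dminus n =
    Set.pi Set.univ (fun j : Fin (n+1) => if j = 0 then Set.Ioo (-1:ℝ) 0 else Set.Ioo 0 1) := by
  ext x
  simp only [Dminus, Set.mem_setOf_eq, Set.mem_pi, Set.mem_univ, forall_true_left]
  constructor
  · rintro ⟨h0, hj⟩ j
    by_cases h : j = 0
    · subst h; simpa using h0
    · simpa [h] using hj j h
  · intro h
    refine ⟨by simpa using h 0, fun j hj => by simpa [hj] using h j⟩

lemma measurableSet_Dminus (n : ℕ) : MeasurableSet (Dminus n) := by
  rw [Dminus_eq_pi]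
  exact MeasurableSet.univ_pi fun j => by split <;> exact measurableSet_Ioo

lemma hyperplane_null (n : ℕ) : volume {x : Fin (n+1) → ℝ | x 0 = 0} = 0 := by
  have heq : {x : Fin (n+1) → ℝ | x 0 = 0} =
      Set.pi Set.univ (fun j : Fin (n+1) => if j = 0 then ({0} : Set ℝ) else Set.univ) := by
    ext x
    simp only [Set.mem_setOf_eq, Set.mem_pi, Set.mem_univ, forall_true_left]
    constructor
    · intro h j; by_cases hj : j = 0 <;> simp [hj, h]
    · intro h; simpa using h 0
  rw [heq, volume_pi_pi]
  refine Finset.prod_eq_zero (Finset.mem_univ (0 : Fin (n+1))) ?_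
  simp

lemma Dminus_subset_reflDomain (n : ℕ) : Dminus n ⊆ reflDomain n := by
  rintro x ⟨h0, hj⟩
  exact ⟨⟨h0.1, lt_trans h0.2 one_pos⟩, hj⟩

lemma unitCube_subset_reflDomain (n : ℕ) : unitCube (n+1) ⊆ reflDomain n := by
  intro x hx
  exact ⟨⟨lt_trans (by norm_num) (hx 0).1, (hx 0).2⟩, fun j _ => hx j⟩

lemma reflDomain_ae_union (n : ℕ) :
    reflDomain n =ᵐ[volume] ((Dminus n ∪ unitCube (n+1) : Set (Fin (n+1) → ℝ))) := by
  rw [Filter.eventuallyEq_set]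
  have : {x : Fin (n+1) → ℝ | ¬(x ∈ reflDomain n ↔ x ∈ Dminus n ∪ unitCube (n+1))} ⊆
      {x : Fin (n+1) → ℝ | x 0 = 0} := by
    intro x hx
    simp only [Set.mem_setOf_eq] at hx ⊢
    by_contra h0
    apply hx
    constructor
    · intro hr
      rcases lt_or_gt_of_ne h0 with hlt | hgt
      · exact Or.inl ⟨⟨hr.1.1, hlt⟩, hr.2⟩
      · exact Or.inr (fun j => by
          by_cases hj : j = 0
          · subst hj; exact ⟨hgt, hr.1.2⟩
          · exact hr.2 j hj)
    · intro hu
      rcases hu with h | h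
      · exact Dminus_subset_reflDomain n h
      · exact unitCube_subset_reflDomain n h
  exact Filter.eventually_of_mem
    (by
      rw [MeasureTheory.mem_ae_iff]
      exact measure_mono_null (by
        intro x hx
        simp only [Set.mem_compl_iff, Set.mem_setOf_eq] at hx
        exact this hx) (hyperplane_null n))
    (fun x hx => by exact hx)

lemma disjoint_Dminus_unitCube (n : ℕ) : Disjoint (Dminus n) (unitCube (n+1)) := by
  rw [Set.disjoint_left]
  rintro x ⟨h0, _⟩ hx
  exact absurd (hx 0).1 (not_lt.2 h0.2.le)

lemma reflPt_preimage_Dminus (n : ℕ) :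
    reflPt ⁻¹' (Dminus n) = unitCube (n+1) := by
  ext x
  simp only [Set.mem_preimage, Dminus, Set.mem_setOf_eq, unitCube, Set.mem_Ioo]
  have h0 : reflPt x 0 = -(x 0) := by rw [reflPt_apply]; simp
  have hne : ∀ j : Fin (n+1), j ≠ 0 → reflPt x j = x j := fun j hj => by
    rw [reflPt_apply, if_neg hj]
  constructor
  · rintro ⟨ha, hj⟩
    rw [h0] at ha
    intro j
    by_cases h : j = 0
    · subst h; constructor <;> linarith [ha.1, ha.2]
    · have := hj j h; rwa [hne j h] at this
  · intro hx
    refine ⟨?_, fun j hj => ?_⟩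
    · rw [h0]; constructor <;> linarith [(hx 0).1, (hx 0).2]
    · rw [hne j hj]; exact hx j

lemma reflPt_mapsTo_Icc (n : ℕ) :
    ∀ x ∈ Dminus n, reflPt x ∈ Set.Icc (0 : Fin (n+1) → ℝ) 1 := by
  rintro x ⟨h0, hj⟩
  have ha : reflPt x 0 = -(x 0) := by rw [reflPt_apply]; simp
  have hne : ∀ j : Fin (n+1), j ≠ 0 → reflPt x j = x j := fun j hj => by
    rw [reflPt_apply, if_neg hj]
  simp only [Set.mem_Ioo] at h0
  constructor
  · intro j
    by_cases h : j = 0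
    · subst h; rw [ha]; show (0:ℝ) ≤ _; linarith [h0.2]
    · rw [hne j h]; exact (hj j h).1.le
  · intro j
    by_cases h : j = 0
    · subst h; rw [ha]; show _ ≤ (1:ℝ); linarith [h0.1]
    · rw [hne j h]; exact (hj j h).2.le

end main


end Aux

set_option maxHeartbeats 1000000 in
/-- One-step reflection preserves solenoidality: if `Ψ` is continuous on the closed unit
cube, `C¹` inside with `div Ψ = 0`, then the reflection extension `EΨ` is
distributionally divergence-free on `(-1,1) × (0,1)^{n-1}`. -/
theorem reflection_preserves_solenoidality (n : ℕ)
    (Ψ : (Fin (n + 1) → ℝ) → (Fin (n + 1) → ℝ))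
    (hc : ContinuousOn Ψ (closure (unitCube (n + 1))))
    (hc1 : ContDiffOn ℝ 1 Ψ (unitCube (n + 1)))
    (hdiv : ∀ x ∈ unitCube (n + 1), ∑ j, pdn j (fun y => Ψ y j) x = 0) :
    ∀ φ : (Fin (n + 1) → ℝ) → ℝ, ContDiff ℝ (⊤ : ℕ∞) φ → HasCompactSupport φ →
      tsupport φ ⊆ reflDomain n →
        ∫ x in reflDomain n, (∑ j, reflExt Ψ x j * pdn j φ x) = 0 := by
  intro φ hφ hφcs hsupp
  classical
  have hc' : ContinuousOn Ψ (Set.Icc (0 : Fin (n+1) → ℝ) 1) := by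
    rw [← closure_unitCube]; exact hc
  set f : (Fin (n+1) → ℝ) → ℝ := fun x => ∑ j, reflExt Ψ x j * pdn j φ x with hfdef
  have hpdnφc : ∀ j : Fin (n+1), Continuous (fun x => pdn j φ x) := fun j =>
    (hφ.continuous_fderiv (by simp)).clm_apply continuous_const
  set H0 : (Fin (n+1) → ℝ) → ℝ := fun x => ∑ j, Ψ x j * pdn j φ x with hH0def
  have hH0c : ContinuousOn H0 (Set.Icc (0 : Fin (n+1) → ℝ) 1) :=
    continuousOn_finset_sum _ fun j _ =>
      ((continuous_apply j).comp_continuousOn hc').mul (hpdnφc j).continuousOn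
  have hcube_sub : unitCube (n+1) ⊆ Set.Icc (0 : Fin (n+1) → ℝ) 1 := by
    rw [← closure_unitCube]; exact subset_closure
  have hintH0 : IntegrableOn H0 (unitCube (n+1)) :=
    (hH0c.integrableOn_compact isCompact_Icc).mono_set hcube_sub
  have hEq0 : Set.EqOn f H0 (unitCube (n+1)) := by
    intro x hx
    have h0 : 0 ≤ x 0 := (hx 0).1.le
    simp only [hfdef, hH0def, reflExt, if_pos h0]
  have hint_cube : IntegrableOn f (unitCube (n+1)) :=
    hintH0.congr_fun hEq0.symm (measurableSet_unitCube (n+1))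
  -- left half
  set K : Set (Fin (n+1) → ℝ) := reflPt '' (Set.Icc (0 : Fin (n+1) → ℝ) 1) with hKdef
  have hKcomp : IsCompact K := isCompact_Icc.image (continuous_reflPt n)
  have hmapsK : Set.MapsTo reflPt K (Set.Icc (0 : Fin (n+1) → ℝ) 1) := by
    rintro x ⟨y, hy, rfl⟩; rw [reflPt_involutive y]; exact hy
  set H1 : (Fin (n+1) → ℝ) → ℝ :=
    fun x => ∑ j, (if j = 0 then Ψ (reflPt x) 0 else -(Ψ (reflPt x) j)) * pdn j φ x with hH1def
  have hH1c : ContinuousOn H1 K := by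
    apply continuousOn_finset_sum
    intro j _
    have hcomp : ContinuousOn (fun x => Ψ (reflPt x)) K :=
      hc'.comp (continuous_reflPt n).continuousOn hmapsK
    by_cases h : j = 0
    · subst h
      simpa using (show ContinuousOn (fun x => Ψ (reflPt x) 0 * pdn 0 φ x) K from ((continuous_apply (0 : Fin (n+1))).comp_continuousOn hcomp).mul
        (hpdnφc 0).continuousOn)
    · simp only [if_neg h]
      exact (((continuous_apply j).comp_continuousOn hcomp)).neg.mul (hpdnφc j).continuousOn
  have hDsubK : Dminus n ⊆ K := fun x hx =>
    ⟨reflPt x, reflPt_mapsTo_Icc n x hx, reflPt_involutive x⟩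
  have hintH1 : IntegrableOn H1 (Dminus n) :=
    (hH1c.integrableOn_compact hKcomp).mono_set hDsubK
  have hEq1 : Set.EqOn f H1 (Dminus n) := by
    intro x hx
    have h0 : ¬ (0 ≤ x 0) := not_le.2 hx.1.2
    simp only [hfdef, hH1def, reflExt, if_neg h0]
  have hint_min : IntegrableOn f (Dminus n) :=
    hintH1.congr_fun hEq1.symm (measurableSet_Dminus n)
  -- substitution
  have hemb : MeasurableEmbedding (reflPt (n := n)) := (reflE n).measurableEmbedding
  have hsub : ∫ x in reflPt ⁻¹' (Dminus n), f (reflPt x) = ∫ y in Dminus n, f y :=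
    (measurePreserving_reflPt n).setIntegral_preimage_emb hemb f (Dminus n)
  rw [reflPt_preimage_Dminus] at hsub
  have hint_comp : IntegrableOn (fun x => f (reflPt x)) (unitCube (n+1)) := by
    have hmp := (measurePreserving_reflPt n).restrict_preimage (measurableSet_Dminus n)
    have := (hmp.integrable_comp_emb hemb).2 hint_min
    rwa [reflPt_preimage_Dminus] at this
  -- combine integrands
  set ψ : (Fin (n+1) → ℝ) → ℝ := psiFun φ with hψdef
  have hψs : ContDiff ℝ (⊤ : ℕ∞) ψ := contDiff_psiFun hφ
  have hEq2 : Set.EqOn (fun y => f (reflPt y) + f y)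
      (fun y => ∑ j, Ψ y j * pdn j ψ y) (unitCube (n+1)) := by
    intro y hy
    have hy0 : 0 < y 0 := (hy 0).1
    have hra : reflPt y 0 = -(y 0) := by rw [reflPt_apply]; simp
    have hry : ¬ (0 ≤ reflPt y 0) := by rw [hra]; linarith
    have hrr : reflPt (reflPt y) = y := reflPt_involutive y
    show f (reflPt y) + f y = _
    have hfy : f y = ∑ j, Ψ y j * pdn j φ y := hEq0 hy
    have hfr : f (reflPt y) =
        ∑ j, (if j = 0 then Ψ y 0 else -(Ψ y j)) * pdn j φ (reflPt y) := by
      simp only [hfdef, reflExt, if_neg hry, hrr]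
    rw [hfy, hfr, ← Finset.sum_add_distrib]
    apply Finset.sum_congr rfl
    intro j _
    rw [hψdef, pdn_psiFun hφ]
    by_cases h : j = 0
    · subst h
      simp only [if_true]
      ring
    · simp only [if_neg h]
      ring
  -- boundary vanishing of ψ
  have hvan : ∀ x : Fin (n+1) → ℝ,
      ((∃ i, x i = 1) ∨ (∃ i, i ≠ 0 ∧ x i = 0)) → ψ x = 0 := by
    intro x hx
    apply psiFun_zero_of_not_mem hsupp
    case hx =>
      rcases hx with ⟨i, hi⟩ | ⟨i, hi0, hi⟩
      · by_cases h : i = 0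
        · subst h
          intro hr; exact absurd hr.1.2 (by rw [hi]; exact lt_irrefl 1)
        · intro hr; exact absurd (hr.2 i h).2 (by rw [hi]; exact lt_irrefl 1)
      · intro hr; exact absurd (hr.2 i hi0).1 (by rw [hi]; exact lt_irrefl 0)
    case hx' =>
      rcases hx with ⟨i, hi⟩ | ⟨i, hi0, hi⟩
      · by_cases h : i = 0
        · subst h
          intro hr
          have : reflPt x 0 = -1 := by rw [reflPt_apply]; simp [hi]
          exact absurd hr.1.1 (by rw [this]; exact lt_irrefl (-1))
        · intro hr
          have : reflPt x i = 1 := by rw [reflPt_apply, if_neg h, hi]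
          exact absurd (hr.2 i h).2 (by rw [this]; exact lt_irrefl 1)
      · intro hr
        have : reflPt x i = 0 := by rw [reflPt_apply, if_neg hi0, hi]
        exact absurd (hr.2 i hi0).1 (by rw [this]; exact lt_irrefl 0)
  have hzero : ∀ x : Fin (n+1) → ℝ, x 0 = 0 → ψ x = 0 := fun x hx =>
    psiFun_zero_of_fst_zero x hx
  calc ∫ x in reflDomain n, f x
      = ∫ x in ((Dminus n ∪ unitCube (n+1) : Set (Fin (n+1) → ℝ))), f x :=
        setIntegral_congr_set (reflDomain_ae_union n)
    _ = (∫ x in Dminus n, f x) + ∫ x in unitCube (n+1), f x :=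
        setIntegral_union (disjoint_Dminus_unitCube n) (measurableSet_unitCube (n+1))
          hint_min hint_cube
    _ = (∫ y in unitCube (n+1), f (reflPt y)) + ∫ x in unitCube (n+1), f x := by rw [hsub]
    _ = ∫ y in unitCube (n+1), (f (reflPt y) + f y) := (integral_add hint_comp hint_cube).symm
    _ = ∫ y in unitCube (n+1), ∑ j, Ψ y j * pdn j ψ y :=
        setIntegral_congr_fun (measurableSet_unitCube (n+1)) hEq2
    _ = 0 := integral_unitCube_div_zero Ψ hc' hc1 hdiv ψ hψs hvan hzero
end
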